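/- arXiv:2410.20959 — 2 statements merged into one kernel-verified Lean document; each statement's English description precedes it below -/
import Mathlib

section
/- Let G = (V, E, w) be a restricted graph: all edge weights satisfy w(e) ≥ −1, and every directed cycle C satisfies w(C) ≥ |C| (minimum cycle mean at least 1). Let S ⊆ V have weak diameter d in G_{≥0} (the graph with weights w_{≥0}(e) = max(0, w(e))), meaning dist_{G_{≥0}}(u,v) ≤ d and dist_{G_{≥0}}(v,u) ≤ d for all u,v ∈ S. Then any shortest S-v-path P in the induced subgraph G[S] has hop-length |P| ≤ d and nonnegative-weight w_{≥0}(P) ≤ d. -/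
def pathWeight {V : Type*} (w : V → V → ℤ) (p : List V) : ℤ :=
  ((p.zip p.tail).map fun e => w e.1 e.2).sum

def IsWalk {V : Type*} (E : V → V → Prop) (p : List V) : Prop :=
  p ≠ [] ∧ List.Chain' E p

/-- A directed cycle: a nonempty closed walk with at least one edge.
Its number of edges is `C.length - 1`. -/
def IsCycle {V : Type*} (E : V → V → Prop) (C : List V) : Prop :=
  IsWalk E C ∧ C.head? = C.getLast? ∧ 2 ≤ C.length

section Helpers

variable {V : Type*}

lemma pathWeight_single (w : V → V → ℤ) (a : V) : pathWeight w [a] = 0 := rfl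

lemma pathWeight_cons_cons (w : V → V → ℤ) (a b : V) (l : List V) :
    pathWeight w (a :: b :: l) = w a b + pathWeight w (b :: l) := by
  simp [pathWeight]

lemma pathWeight_append (w : V → V → ℤ) :
    ∀ (p : List V) (b : V) (t : List V), p.getLast? = some b →
    pathWeight w (p ++ t) = pathWeight w p + pathWeight w (b :: t)
  | [], b, t, h => by simp at h
  | [a], b, t, h => by
      simp only [List.getLast?_singleton, Option.some.injEq] at h
      subst h
      rw [List.singleton_append, pathWeight_single, zero_add]
  | a :: c :: p, b, t, h => by
      have h' : (c :: p).getLast? = some b := by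
        rw [List.getLast?_cons_cons] at h; exact h
      have ih := pathWeight_append w (c :: p) b t h'
      have e1 : (a :: c :: p) ++ t = a :: ((c :: p) ++ t) := by simp
      rw [e1, List.cons_append, pathWeight_cons_cons, ← List.cons_append, ih,
        pathWeight_cons_cons]
      ring

lemma pathWeight_le_max (w : V → V → ℤ) (l : List V) :
    pathWeight w l ≤ pathWeight (fun a b => max 0 (w a b)) l :=
  List.sum_le_sum (by intro i hi; exact le_max_right _ _)

lemma pathWeight_max_nonneg (w : V → V → ℤ) (l : List V) :
    0 ≤ pathWeight (fun a b => max 0 (w a b)) l :=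
  List.sum_nonneg (by intro i hi; simp at hi; obtain ⟨a, b, -, rfl⟩ := hi; exact le_max_left _ _)

lemma pathWeight_max_le (w : V → V → ℤ) (E : V → V → Prop)
    (hw1 : ∀ a b, E a b → -1 ≤ w a b) :
    ∀ l : List V, l ≠ [] → List.Chain' E l →
      pathWeight (fun a b => max 0 (w a b)) l ≤ pathWeight w l + ((l.length : ℤ) - 1)
  | [], h, _ => absurd rfl h
  | [a], _, _ => by simp [pathWeight_single]
  | a :: b :: l, _, hc => by
      simp only [List.Chain', List.isChain_cons_cons] at hc
      have ih := pathWeight_max_le w E hw1 (b :: l) (by simp) hc.2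
      have hab : max 0 (w a b) ≤ w a b + 1 := by
        have := hw1 a b hc.1; omega
      rw [pathWeight_cons_cons, pathWeight_cons_cons]
      simp only [List.length_cons] at ih ⊢
      push_cast at ih ⊢
      linarith

end Helpers

/-- Key lemma of Bernstein–Nanongkai–Wulff-Nilsen: in a restricted graph
(`w(e) ≥ -1`, every cycle `C` has `w(C) ≥ |C|`), if `S` has weak diameter `d`
in `G_{≥0}`, then any shortest `S`-`v`-path `P` in `G[S]` has hop-length
`|P| ≤ d` and nonnegative weight `w_{≥0}(P) ≤ d`. -/
theorem stmt4 {V : Type*} [Fintype V] (E : V → V → Prop) (w : V → V → ℤ)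
    (hw1 : ∀ u v : V, E u v → -1 ≤ w u v)
    (hw2 : ∀ C : List V, IsCycle E C → ((C.length : ℤ) - 1) ≤ pathWeight w C)
    (S : Set V) (d : ℤ)
    (hdiam : ∀ u ∈ S, ∀ v ∈ S, ∃ p : List V, IsWalk E p ∧ p.head? = some u ∧
      p.getLast? = some v ∧ pathWeight (fun a b => max 0 (w a b)) p ≤ d)
    (v : V) (hv : v ∈ S) (P : List V)
    (hPwalk : IsWalk E P) (hPS : ∀ x ∈ P, x ∈ S) (hPv : P.getLast? = some v)
    (hPshortest : ∀ Q : List V, IsWalk E Q → (∀ x ∈ Q, x ∈ S) →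
      Q.getLast? = some v → pathWeight w P ≤ pathWeight w Q) :
    ((P.length : ℤ) - 1) ≤ d ∧ pathWeight (fun a b => max 0 (w a b)) P ≤ d := by
  obtain ⟨hPne, hPchain⟩ := hPwalk
  -- d ≥ 0
  obtain ⟨p0, _, _, _, hp0⟩ := hdiam v hv v hv
  have hd0 : 0 ≤ d := le_trans (pathWeight_max_nonneg w p0) hp0
  -- P is shortest, and the trivial path [v] is a candidate
  have hP0 : pathWeight w P ≤ 0 := by
    have := hPshortest [v] ⟨by simp, List.isChain_singleton _⟩ (by intro x hx; simp at hx; subst hx; exact hv)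
      (by simp)
    simpa [pathWeight_single] using this
  obtain ⟨u, P', rfl⟩ := List.exists_cons_of_ne_nil hPne
  have hu : u ∈ S := hPS u (by simp)
  -- bound on w≥0 vs w on P
  have hmax : pathWeight (fun a b => max 0 (w a b)) (u :: P') ≤
      pathWeight w (u :: P') + (((u :: P').length : ℤ) - 1) :=
    pathWeight_max_le w E hw1 _ (by simp) hPchain
  -- return walk R from v to u
  obtain ⟨R, ⟨hRne, hRchain⟩, hRhead, hRlast, hRw⟩ := hdiam v hv u hu
  obtain ⟨v', R', rfl⟩ := List.exists_cons_of_ne_nil hRne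
  obtain rfl : v = v' := by symm; simpa using hRhead
  have hRw' : pathWeight w (v :: R') ≤ d := le_trans (pathWeight_le_max w _) hRw
  -- key: (P.length : ℤ) - 1 ≤ pathWeight w P + d
  have key : ((u :: P').length : ℤ) - 1 ≤ pathWeight w (u :: P') + d := by
    rcases R' with _ | ⟨y, R''⟩
    · -- u = v, P itself is either trivial or a cycle
      have huv : v = u := by simpa using hRlast
      subst huv
      rcases P' with _ | ⟨a, Q⟩
      · simp [pathWeight_single]; omega
      · have hcyc : IsCycle E (v :: a :: Q) := by
          refine ⟨⟨by simp, hPchain⟩, ?_, by simp⟩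
          simpa using hPv.symm
        have := hw2 _ hcyc
        linarith
    · simp only [List.Chain', List.isChain_cons_cons] at hRchain
      set C : List V := (u :: P') ++ (y :: R'') with hC
      have hlast : C.getLast? = some u := by
        rw [hC, List.getLast?_append_of_ne_nil _ (by simp)]
        simpa using hRlast
      have hcchain : List.Chain' E C := by
        apply List.IsChain.append hPchain hRchain.2
        intro x hx z hz
        rw [hPv] at hx
        simp at hx hz
        subst hx; subst hz
        exact hRchain.1
      have hcyc : IsCycle E C := by
        refine ⟨⟨by simp [hC], hcchain⟩, ?_, ?_⟩
        · have h2 := hlast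
          rw [hC, List.cons_append] at h2
          rw [hC, List.cons_append, List.head?_cons, h2]
        · simp [hC]; omega
      have hsplit : pathWeight w C = pathWeight w (u :: P') + pathWeight w (v :: y :: R'') :=
        pathWeight_append w (u :: P') v (y :: R'') hPv
      have hlen : (C.length : ℤ) = ((u :: P').length : ℤ) + ((y :: R'').length : ℤ) := by
        rw [hC]; push_cast [List.length_append]; ring
      have hwC := hw2 C hcyc
      have hRlen : (1 : ℤ) ≤ ((y :: R'').length : ℤ) := by
        have : 1 ≤ (y :: R'').length := by simp
        exact_mod_cast this
      linarith
  exact ⟨by linarith, by linarith⟩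
end

section
/- Let G = (V, E, w) be a directed graph with integer weights w(e) ≥ −1. Suppose V is partitioned into clusters S_1, ..., S_k, and for each i we have a potential φ^{(i)} : S_i → ℤ with −(n−1) ≤ φ^{(i)}(v) ≤ 0 for all v ∈ S_i, such that every edge (u,v) with both endpoints in the same S_i satisfies w(u,v) + φ^{(i)}(u) − φ^{(i)}(v) ≥ 0. Define φ(v) = φ^{(i)}(v) − i·n for v ∈ S_i. Then every edge e = (u,v) with u ∈ S_i, v ∈ S_j and i ≤ j satisfies w_φ(e) = w(u,v) + φ(u) − φ(v) ≥ 0. -/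
/-- Combining the clusters' potentials: `V` is partitioned into clusters by a
cluster-index function `σ : V → ℕ`, each cluster carries a potential
`ψ` with `-(n-1) ≤ ψ(v) ≤ 0` making intra-cluster edges nonnegative.
Shifting by `-σ(v)·n` makes every non-cut edge (cluster index nondecreasing)
nonnegative. -/
theorem stmt7 {V : Type*} [Fintype V] (E : V → V → Prop) (w : V → V → ℤ)
    (hw : ∀ u v : V, E u v → -1 ≤ w u v)
    (σ : V → ℕ) (ψ : V → ℤ)
    (hψ : ∀ v : V, -((Fintype.card V : ℤ) - 1) ≤ ψ v ∧ ψ v ≤ 0)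
    (hintra : ∀ u v : V, E u v → σ u = σ v → 0 ≤ w u v + ψ u - ψ v) :
    ∀ u v : V, E u v → σ u ≤ σ v →
      0 ≤ w u v + (ψ u - (σ u : ℤ) * (Fintype.card V : ℤ))
        - (ψ v - (σ v : ℤ) * (Fintype.card V : ℤ)) := by
  intro u v hE hle
  rcases eq_or_lt_of_le hle with heq | hlt
  · have := hintra u v hE heq
    rw [heq]
    linarith
  · have h1 : (σ u : ℤ) + 1 ≤ (σ v : ℤ) := by exact_mod_cast hlt
    have hn : (0 : ℤ) ≤ (Fintype.card V : ℤ) := by positivity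
    have hgap : (Fintype.card V : ℤ) ≤ ((σ v : ℤ) - σ u) * Fintype.card V := by
      nlinarith
    have := hw u v hE
    have h2 := (hψ u).1
    have h3 := (hψ v).2
    nlinarith
end
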